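/- Let $(\Omega, \mathcal{F}, \mathbb{P})$ be a probability space with a filtration $(\mathcal{F}_k)_{k=0}^N$, $N = \tilde n + m$ with $\tilde n, m \ge 1$. For $1 \le k \le N$ let $\hat C_k$ be an $\mathcal{F}_k$-measurable random variable with $|\hat C_k| \le 1$ almost surely, and let $C_k = \mathbb{E}[\hat C_k \mid \mathcal{F}_{k-1}]$. Let $\{1, \dots, N\} = T \sqcup P$ be a partition with $|T| = \tilde n$ and $|P| = m$, let $T = G_1 \sqcup \dots \sqcup G_s$ be a further partition into nonempty groups, let $\mu^{(1)}, \dots, \mu^{(s)} \in [-1, 1]$, define $\mu_i = \mu^{(j)}$ for $i \in G_j$, let $\mu_i \in [-1,1]$ be arbitrary for $i \in P$, and set $\tilde\mu = \frac{1}{N}\sum_{i=1}^N \mu_i$. Then, for every $\epsilon > 0$, $\mathbb{P}\Big( \big\{\forall j \le s,\ \big|\tfrac{1}{|G_j|}\textstyle\sum_{i \in G_j} \hat C_i - \mu^{(j)}\big| \le \epsilon \big\} \cap \big\{ \big|\tfrac{1}{N}\textstyle\sum_{i=1}^N C_i - \tilde\mu\big| > \tfrac{2\tilde n \epsilon + m(2+\epsilon)}{\tilde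 n + m} \big\} \Big) \le 2\exp\big(-(\tilde n + m)\epsilon^2/8\big)$. -/

import Mathlib

/-!
The increments `Ĉ_k - C_k` form a martingale difference sequence bounded by `2`. Bounding
`exp (t x)` on `[-2, 2]` by its chord and taking conditional expectations gives
`E[exp (t (Ĉ_k - C_k)) | ℱ_{k-1}] ≤ cosh (2t) ≤ exp (2t²)`, so the exponential moments of the sum
multiply out, and Chernoff's bound (Azuma–Hoeffding) shows that `|∑ (Ĉ_k - C_k)| ≥ Nε` has
probability at most `2 exp (-Nε²/8)`. Off that event the estimate is deterministic: the groups
contribute at most `ñε` to `|∑ (Ĉ_i - μ_i)|` and the positions in `P` at most `2m`.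
-/

open MeasureTheory ProbabilityTheory Finset Real

theorem Real.exp_mul_le_cosh_add_sinh_div_mul {a t x : ℝ} (ha : 0 < a) (hx : |x| ≤ a) :
    exp (t * x) ≤ cosh (a * t) + sinh (a * t) / a * x := by
  obtain ⟨hxl, hxu⟩ := abs_le.mp hx
  have key := convexOn_exp.2 (Set.mem_univ (a * t)) (Set.mem_univ (-(a * t)))
    (div_nonneg (by linarith : 0 ≤ a + x) (by linarith : 0 ≤ 2 * a))
    (div_nonneg (by linarith : 0 ≤ a - x) (by linarith : 0 ≤ 2 * a)) (by field_simp; ring)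
  simp only [smul_eq_mul] at key
  calc exp (t * x) = exp ((a + x) / (2 * a) * (a * t) + (a - x) / (2 * a) * -(a * t)) := by
        congr 1; field_simp; ring
    _ ≤ _ := key
    _ = _ := by rw [cosh_eq, sinh_eq]; field_simp; ring

section Conditional

variable {Ω : Type*} {m m0 : MeasurableSpace Ω} {μ : Measure Ω} [IsFiniteMeasure μ]

theorem condExp_exp_mul_le_of_abs_le {X : Ω → ℝ} {a : ℝ} (hm : m ≤ m0) (ha : 0 < a)
    (hX : AEMeasurable X μ) (hXa : ∀ᵐ ω ∂μ, |X ω| ≤ a) (hX0 : μ[X | m] =ᵐ[μ] 0) (t : ℝ) :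
    μ[fun ω ↦ exp (t * X ω) | m] ≤ᵐ[μ] fun _ ↦ exp (a ^ 2 * t ^ 2 / 2) := by
  have hXIcc : ∀ᵐ ω ∂μ, X ω ∈ Set.Icc (-a) a := by
    filter_upwards [hXa] with ω h using abs_le.mp h
  have hXint : Integrable X μ := .of_mem_Icc _ _ hX hXIcc
  set L : Ω → ℝ := (fun _ ↦ cosh (a * t)) + (sinh (a * t) / a) • X
  have hchord : (fun ω ↦ exp (t * X ω)) ≤ᵐ[μ] L := by
    filter_upwards [hXa] with ω h
    simpa [L] using exp_mul_le_cosh_add_sinh_div_mul (t := t) ha h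
  have hL : μ[L | m] =ᵐ[μ] fun _ ↦ cosh (a * t) := by
    filter_upwards [condExp_add (integrable_const (cosh (a * t))) (hXint.smul (sinh (a * t) / a)) m,
      condExp_smul (sinh (a * t) / a) X m, hX0] with ω h₁ h₂ h₃
    simp [L, h₁, h₂, h₃, condExp_const hm]
  filter_upwards [condExp_mono (integrable_exp_mul_of_mem_Icc hX hXIcc)
    ((integrable_const _).add (hXint.smul _)) hchord, hL] with ω h₁ h₂
  calc _ ≤ _ := h₁
    _ = cosh (a * t) := h₂
    _ ≤ exp ((a * t) ^ 2 / 2) := cosh_le_exp_half_sq _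
    _ = _ := by ring_nf

theorem mgf_add_le_mul_of_condExp_le {X Y : Ω → ℝ} {t c : ℝ} (hm : m ≤ m0)
    (hX : StronglyMeasurable[m] X) (hXint : Integrable (fun ω ↦ exp (t * X ω)) μ)
    (hYint : Integrable (fun ω ↦ exp (t * Y ω)) μ)
    (hXYint : Integrable (fun ω ↦ exp (t * (X + Y) ω)) μ)
    (hYc : μ[fun ω ↦ exp (t * Y ω) | m] ≤ᵐ[μ] fun _ ↦ c) :
    mgf (X + Y) μ t ≤ mgf X μ t * c := by
  set f : Ω → ℝ := fun ω ↦ exp (t * X ω)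
  set g : Ω → ℝ := fun ω ↦ exp (t * Y ω)
  have hfg : (fun ω ↦ exp (t * (X + Y) ω)) = f * g := by
    ext ω; simp [f, g, mul_add, exp_add]
  have hf : StronglyMeasurable[m] f := continuous_exp.comp_stronglyMeasurable (hX.const_mul t)
  rw [hfg] at hXYint
  have hpull : μ[f * g | m] ≤ᵐ[μ] fun ω ↦ f ω * c := by
    filter_upwards [condExp_mul_of_stronglyMeasurable_left hf hXYint hYint, hYc] with ω h₁ h₂
    rw [h₁]
    exact mul_le_mul_of_nonneg_left h₂ (exp_pos _).le
  calc mgf (X + Y) μ t = ∫ ω, (μ[f * g | m]) ω ∂μ := by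
        rw [integral_condExp hm, ← hfg]; rfl
    _ ≤ ∫ ω, f ω * c ∂μ := integral_mono_ae integrable_condExp (hXint.mul_const c) hpull
    _ = mgf X μ t * c := integral_mul_const c f

end Conditional

section BoundedMartingaleDiff

variable {Ω : Type*} {m0 : MeasurableSpace Ω} {μ : Measure Ω}

structure IsBoundedMartingaleDiff (ℱ : Filtration ℕ m0) (μ : Measure Ω) (d : ℕ → Ω → ℝ)
    (N : ℕ) (a : ℝ) : Prop where
  stronglyMeasurable : ∀ k ∈ Icc 1 N, StronglyMeasurable[ℱ k] (d k)
  ae_abs_le : ∀ k ∈ Icc 1 N, ∀ᵐ ω ∂μ, |d k ω| ≤ a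
  condExp_eq_zero : ∀ k ∈ Icc 1 N, μ[d k | ℱ (k - 1)] =ᵐ[μ] 0

theorem isBoundedMartingaleDiff_sub_condExp [IsFiniteMeasure μ] {ℱ : Filtration ℕ m0}
    {f : ℕ → Ω → ℝ} {N : ℕ} {b : ℝ}
    (hf : ∀ k ∈ Icc 1 N, StronglyMeasurable[ℱ k] (f k))
    (hb : ∀ k ∈ Icc 1 N, ∀ᵐ ω ∂μ, |f k ω| ≤ b) :
    IsBoundedMartingaleDiff ℱ μ (fun k ↦ f k - μ[f k | ℱ (k - 1)]) N (2 * b) where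
  stronglyMeasurable k hk :=
    (hf k hk).sub (stronglyMeasurable_condExp.mono (ℱ.mono (Nat.sub_le k 1)))
  ae_abs_le k hk := by
    filter_upwards [hb k hk, ae_bdd_abs_condExp_of_ae_bdd_abs (m := ℱ (k - 1)) (hb k hk)]
      with ω h₁ h₂
    calc |f k ω - (μ[f k | ℱ (k - 1)]) ω| ≤ |f k ω| + |(μ[f k | ℱ (k - 1)]) ω| := abs_sub _ _
      _ ≤ 2 * b := by linarith
  condExp_eq_zero k hk := by
    have hint : Integrable (f k) μ :=
      .of_mem_Icc (-b) b ((hf k hk).mono (ℱ.le k)).measurable.aemeasurable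
        (by filter_upwards [hb k hk] with ω h using abs_le.mp h)
    filter_upwards [condExp_sub hint integrable_condExp (ℱ (k - 1))] with ω h
    rw [h, Pi.sub_apply, condExp_of_stronglyMeasurable (ℱ.le (k - 1)) stronglyMeasurable_condExp
      integrable_condExp, sub_self, Pi.zero_apply]

namespace IsBoundedMartingaleDiff

variable {ℱ : Filtration ℕ m0} {d : ℕ → Ω → ℝ} {N : ℕ} {a : ℝ}

theorem of_le (h : IsBoundedMartingaleDiff ℱ μ d N a) {n : ℕ} (hn : n ≤ N) :
    IsBoundedMartingaleDiff ℱ μ d n a :=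
  have hsub := Icc_subset_Icc_right (a := 1) hn
  ⟨fun k hk ↦ h.stronglyMeasurable k (hsub hk), fun k hk ↦ h.ae_abs_le k (hsub hk),
    fun k hk ↦ h.condExp_eq_zero k (hsub hk)⟩

theorem neg (h : IsBoundedMartingaleDiff ℱ μ d N a) :
    IsBoundedMartingaleDiff ℱ μ (fun k ↦ -d k) N a where
  stronglyMeasurable k hk := (h.stronglyMeasurable k hk).neg
  ae_abs_le k hk := by filter_upwards [h.ae_abs_le k hk] with ω hω using by simpa using hω
  condExp_eq_zero k hk := by
    filter_upwards [condExp_neg (d k) (ℱ (k - 1)), h.condExp_eq_zero k hk] with ω h₁ h₂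
    simp [h₁, h₂]

theorem stronglyMeasurable_sum (h : IsBoundedMartingaleDiff ℱ μ d N a) :
    StronglyMeasurable[ℱ N] (fun ω ↦ ∑ i ∈ Icc 1 N, d i ω) :=
  Finset.stronglyMeasurable_fun_sum _ fun i hi ↦
    (h.stronglyMeasurable i hi).mono (ℱ.mono (mem_Icc.1 hi).2)

theorem aemeasurable (h : IsBoundedMartingaleDiff ℱ μ d N a) {k : ℕ} (hk : k ∈ Icc 1 N) :
    AEMeasurable (d k) μ :=
  ((h.stronglyMeasurable k hk).mono (ℱ.le k)).measurable.aemeasurable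

theorem abs_sum_le (h : IsBoundedMartingaleDiff ℱ μ d N a) :
    ∀ᵐ ω ∂μ, |∑ i ∈ Icc 1 N, d i ω| ≤ N * a := by
  filter_upwards [(Filter.eventually_all_finset _).2 h.ae_abs_le] with ω hω
  calc |∑ i ∈ Icc 1 N, d i ω| ≤ ∑ i ∈ Icc 1 N, |d i ω| := abs_sum_le_sum_abs _ _
    _ ≤ ∑ _i ∈ Icc 1 N, a := sum_le_sum hω
    _ = N * a := by simp

theorem integrable_exp_mul_sum [IsFiniteMeasure μ] (h : IsBoundedMartingaleDiff ℱ μ d N a)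
    (t : ℝ) : Integrable (fun ω ↦ exp (t * ∑ i ∈ Icc 1 N, d i ω)) μ :=
  integrable_exp_mul_of_mem_Icc (a := -(N * a)) (b := N * a)
    (h.stronglyMeasurable_sum.mono (ℱ.le N)).measurable.aemeasurable
    (by filter_upwards [h.abs_sum_le] with ω hω using abs_le.mp hω)

theorem mgf_sum_le [IsProbabilityMeasure μ] (h : IsBoundedMartingaleDiff ℱ μ d N a)
    (ha : 0 < a) (t : ℝ) :
    mgf (fun ω ↦ ∑ i ∈ Icc 1 N, d i ω) μ t ≤ exp (N * (a ^ 2 * t ^ 2 / 2)) := by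
  induction N with
  | zero => simp
  | succ n ih =>
    have hsucc : (fun ω ↦ ∑ i ∈ Icc 1 (n + 1), d i ω)
        = (fun ω ↦ ∑ i ∈ Icc 1 n, d i ω) + d (n + 1) := by
      ext ω
      exact sum_Icc_succ_top (by omega) _
    have hn := h.of_le n.le_succ
    have hlast : n + 1 ∈ Icc 1 (n + 1) := by simp
    have hlast_int : Integrable (fun ω ↦ exp (t * d (n + 1) ω)) μ :=
      integrable_exp_mul_of_mem_Icc (a := -a) (b := a) (h.aemeasurable hlast)
        (by filter_upwards [h.ae_abs_le _ hlast] with ω hω using abs_le.mp hω)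
    calc mgf (fun ω ↦ ∑ i ∈ Icc 1 (n + 1), d i ω) μ t
        ≤ mgf (fun ω ↦ ∑ i ∈ Icc 1 n, d i ω) μ t * exp (a ^ 2 * t ^ 2 / 2) := by
          rw [hsucc]
          refine mgf_add_le_mul_of_condExp_le (ℱ.le n) hn.stronglyMeasurable_sum
            (hn.integrable_exp_mul_sum t) hlast_int ?_ ?_
          · rw [← hsucc]; exact h.integrable_exp_mul_sum t
          · exact condExp_exp_mul_le_of_abs_le (ℱ.le n) ha (h.aemeasurable hlast)
              (h.ae_abs_le _ hlast) (h.condExp_eq_zero _ hlast) t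
      _ ≤ exp (n * (a ^ 2 * t ^ 2 / 2)) * exp (a ^ 2 * t ^ 2 / 2) := by
          gcongr
          exact ih hn
      _ = exp ((n + 1 : ℕ) * (a ^ 2 * t ^ 2 / 2)) := by
          rw [← exp_add]; push_cast; ring_nf

theorem measureReal_sum_ge_le [IsProbabilityMeasure μ] (h : IsBoundedMartingaleDiff ℱ μ d N a)
    (ha : 0 < a) {ε : ℝ} (hε : 0 ≤ ε) :
    μ.real {ω | N * ε ≤ ∑ i ∈ Icc 1 N, d i ω} ≤ exp (-(N * ε ^ 2) / (2 * a ^ 2)) := by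
  have ht : 0 ≤ ε / a ^ 2 := by positivity
  calc _ ≤ exp (-(ε / a ^ 2) * (N * ε)) * mgf (fun ω ↦ ∑ i ∈ Icc 1 N, d i ω) μ (ε / a ^ 2) :=
        measure_ge_le_exp_mul_mgf _ ht (h.integrable_exp_mul_sum _)
    _ ≤ exp (-(ε / a ^ 2) * (N * ε)) * exp (N * (a ^ 2 * (ε / a ^ 2) ^ 2 / 2)) := by
        gcongr
        exact h.mgf_sum_le ha _
    _ = _ := by
        rw [← exp_add]
        congr 1
        field_simp
        ring

theorem measure_abs_sum_ge_le [IsProbabilityMeasure μ] (h : IsBoundedMartingaleDiff ℱ μ d N a)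
    (ha : 0 < a) {ε : ℝ} (hε : 0 ≤ ε) :
    μ {ω | N * ε ≤ |∑ i ∈ Icc 1 N, d i ω|}
      ≤ ENNReal.ofReal (2 * exp (-(N * ε ^ 2) / (2 * a ^ 2))) := by
  have hsplit : {ω | N * ε ≤ |∑ i ∈ Icc 1 N, d i ω|} = {ω | N * ε ≤ ∑ i ∈ Icc 1 N, d i ω}
      ∪ {ω | N * ε ≤ ∑ i ∈ Icc 1 N, (fun k ↦ -d k) i ω} := by
    ext ω
    simp [le_abs]
  rw [← ofReal_measureReal, hsplit]
  refine ENNReal.ofReal_le_ofReal ((measureReal_union_le _ _).trans ?_)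
  linarith [h.measureReal_sum_ge_le ha hε, h.neg.measureReal_sum_ge_le ha hε]

end IsBoundedMartingaleDiff

end BoundedMartingaleDiff

section GroupAverages

variable {ι α : Type*} {ε : ℝ}

theorem Finset.abs_sum_sub_le_card_mul_of_abs_avg_sub_le (A : Finset α) {x : α → ℝ} {c : ℝ}
    (h : |(1 / #A : ℝ) * ∑ i ∈ A, x i - c| ≤ ε) : |∑ i ∈ A, (x i - c)| ≤ #A * ε := by
  have hsum : ∑ i ∈ A, (x i - c) = #A * ((1 / #A : ℝ) * ∑ i ∈ A, x i - c) := by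
    rcases A.eq_empty_or_nonempty with rfl | hA
    · simp
    · rw [sum_sub_distrib, sum_const, nsmul_eq_mul]
      field_simp [hA.card_pos.ne']
  rw [hsum, abs_mul, Nat.abs_cast]
  gcongr

theorem Finset.abs_sum_biUnion_sub_le [DecidableEq α] (s : Finset ι) {G : ι → Finset α}
    (hG : (s : Set ι).PairwiseDisjoint G) {x y : α → ℝ} {c : ι → ℝ}
    (hy : ∀ j ∈ s, ∀ i ∈ G j, y i = c j)
    (hx : ∀ j ∈ s, |(1 / #(G j) : ℝ) * ∑ i ∈ G j, x i - c j| ≤ ε) :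
    |∑ i ∈ s.biUnion G, (x i - y i)| ≤ #(s.biUnion G) * ε := by
  rw [sum_biUnion hG, card_biUnion hG]
  push_cast
  rw [sum_mul]
  refine (abs_sum_le_sum_abs _ _).trans (sum_le_sum fun j hj ↦ ?_)
  rw [sum_congr rfl fun i hi ↦ by rw [hy j hj i hi]]
  exact (G j).abs_sum_sub_le_card_mul_of_abs_avg_sub_le (hx j hj)

theorem abs_avg_sub_avg_le_of_abs_groupAvg_sub_le [DecidableEq α]
    {s : Finset ι} {G : ι → Finset α} {T P I : Finset α} {x y z : α → ℝ} {c : ι → ℝ}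
    (hG : (s : Set ι).PairwiseDisjoint G) (hGT : s.biUnion G = T) (hTP : T ∪ P = I)
    (hdisj : Disjoint T P) (hy : ∀ j ∈ s, ∀ i ∈ G j, y i = c j) (hyP : ∀ i ∈ P, |y i| ≤ 1)
    (hx : ∀ j ∈ s, |(1 / #(G j) : ℝ) * ∑ i ∈ G j, x i - c j| ≤ ε) (hxP : ∀ i ∈ P, |x i| ≤ 1)
    (hxz : |∑ i ∈ I, (x i - z i)| ≤ #I * ε) :
    |(1 / #I : ℝ) * ∑ i ∈ I, z i - (1 / #I : ℝ) * ∑ i ∈ I, y i|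
      ≤ (2 * #T * ε + #P * (2 + ε)) / (#T + #P) := by
  have hT : |∑ i ∈ T, (x i - y i)| ≤ #T * ε := hGT ▸ s.abs_sum_biUnion_sub_le hG hy hx
  have hP : |∑ i ∈ P, (x i - y i)| ≤ #P * 2 := by
    refine (abs_sum_le_sum_abs _ _).trans <|
      (sum_le_card_nsmul _ _ 2 fun i hi ↦ ?_).trans_eq (nsmul_eq_mul _ _)
    linarith [abs_sub (x i) (y i), hxP i hi, hyP i hi]
  have hxy : |∑ i ∈ I, (x i - y i)| ≤ #T * ε + #P * 2 := by
    rw [← hTP, sum_union hdisj]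
    exact (abs_add_le _ _).trans (add_le_add hT hP)
  have hI : (#I : ℝ) = #T + #P := by
    rw [← hTP, card_union_of_disjoint hdisj]
    push_cast
    ring
  calc |(1 / #I : ℝ) * ∑ i ∈ I, z i - (1 / #I : ℝ) * ∑ i ∈ I, y i|
      = (1 / #I) * |∑ i ∈ I, (x i - y i) - ∑ i ∈ I, (x i - z i)| := by
        rw [← mul_sub, abs_mul, abs_of_nonneg (by positivity), sum_sub_distrib, sum_sub_distrib]
        ring_nf
    _ ≤ (1 / #I) * (#T * ε + #P * 2 + #I * ε) := by
        gcongr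
        exact (abs_sub _ _).trans (add_le_add hxy hxz)
    _ = (2 * #T * ε + #P * (2 + ε)) / (#T + #P) := by
        rw [hI]
        rcases eq_or_ne ((#T : ℝ) + #P) 0 with h | h
        · simp [h]
        · field_simp
          ring

end GroupAverages

theorem correlation_estimation_general
    {Ω : Type*} {m0 : MeasurableSpace Ω} {μ : Measure Ω} [IsProbabilityMeasure μ]
    (ntil m s : ℕ)
    (N : ℕ) (hN : N = ntil + m)
    (ℱ : Filtration ℕ m0)
    (Chat : ℕ → Ω → ℝ)
    (hmeas : ∀ k, 1 ≤ k → k ≤ N → StronglyMeasurable[ℱ k] (Chat k))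
    (hbdd : ∀ k, 1 ≤ k → k ≤ N → ∀ᵐ ω ∂μ, |Chat k ω| ≤ 1)
    (C : ℕ → Ω → ℝ) (hC : ∀ k, 1 ≤ k → k ≤ N → C k = μ[Chat k | ℱ (k - 1)])
    (T P : Finset ℕ)
    (hTP : T ∪ P = Finset.Icc 1 N) (hdisj : Disjoint T P)
    (hTcard : T.card = ntil) (hPcard : P.card = m)
    (G : Fin s → Finset ℕ)
    (hGdisj : ∀ j k : Fin s, j ≠ k → Disjoint (G j) (G k))
    (hGunion : Finset.univ.biUnion G = T)
    (μG : Fin s → ℝ)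
    (μi : ℕ → ℝ) (hμi : ∀ j : Fin s, ∀ i ∈ G j, μi i = μG j)
    (hμiP : ∀ i ∈ P, |μi i| ≤ 1)
    (μtil : ℝ) (hμtil : μtil = (1 / N : ℝ) * ∑ i ∈ Finset.Icc 1 N, μi i)
    (ε : ℝ) (hε : 0 < ε) :
    μ {ω | (∀ j : Fin s,
            |(1 / (G j).card : ℝ) * ∑ i ∈ G j, Chat i ω - μG j| ≤ ε) ∧
          (2 * ntil * ε + m * (2 + ε)) / (ntil + m) <
            |(1 / N : ℝ) * ∑ i ∈ Finset.Icc 1 N, C i ω - μtil|}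
      ≤ ENNReal.ofReal (2 * Real.exp (-((ntil + m : ℝ) * ε ^ 2) / 8)) := by
  have hIcc (k : ℕ) (hk : k ∈ Icc 1 N) : 1 ≤ k ∧ k ≤ N := mem_Icc.1 hk
  have hd := isBoundedMartingaleDiff_sub_condExp (μ := μ) (b := 1)
    (fun k hk ↦ hmeas k (hIcc k hk).1 (hIcc k hk).2) (fun k hk ↦ hbdd k (hIcc k hk).1 (hIcc k hk).2)
  have hdC (ω : Ω) : ∑ i ∈ Icc 1 N, (Chat i - μ[Chat i | ℱ (i - 1)]) ω
      = ∑ i ∈ Icc 1 N, (Chat i ω - C i ω) :=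
    sum_congr rfl fun i hi ↦ by rw [hC i (hIcc i hi).1 (hIcc i hi).2]; rfl
  have hChatP : ∀ᵐ ω ∂μ, ∀ i ∈ P, |Chat i ω| ≤ 1 :=
    (Filter.eventually_all_finset _).2 fun i hi ↦
      have hi' := hIcc i (hTP ▸ mem_union_right T hi)
      hbdd i hi'.1 hi'.2
  calc _ ≤ μ {ω | N * ε ≤ |∑ i ∈ Icc 1 N, (Chat i - μ[Chat i | ℱ (i - 1)]) ω|} := by
        refine measure_mono_ae ?_
        filter_upwards [hChatP] with ω hω ⟨hgroups, hfar⟩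
        by_contra hnear
        have hnear' : |∑ i ∈ Icc 1 N, (Chat i ω - C i ω)| ≤ #(Icc 1 N) * ε := by
          rw [Nat.card_Icc, Nat.add_sub_cancel, ← hdC]
          exact (not_le.1 hnear).le
        refine hfar.not_ge ?_
        have := abs_avg_sub_avg_le_of_abs_groupAvg_sub_le (fun j _ k _ ↦ hGdisj j k) hGunion hTP
          hdisj (fun j _ ↦ hμi j) hμiP (fun j _ ↦ hgroups j) hω hnear'
        simpa [hμtil, hTcard, hPcard] using this
    _ ≤ ENNReal.ofReal (2 * exp (-(N * ε ^ 2) / (2 * (2 * 1) ^ 2))) :=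
        hd.measure_abs_sum_ge_le (by norm_num) hε.le
    _ = _ := by
        rw [hN]
        push_cast
        ring_nf

/-- if all group averages of the measured correlations `Ĉ_i` are
`ε`-close to the ideal group correlations, then except with probability
`2 exp(-(ñ+m)ε²/8)` the average of the real correlations
`C_i = E[Ĉ_i | ℱ_{i-1}]` is `(2ñε + m(2+ε))/(ñ+m)`-close to the average ideal
correlation. -/
theorem correlation_estimation
    {Ω : Type*} {m0 : MeasurableSpace Ω} {μ : Measure Ω} [IsProbabilityMeasure μ]
    (ntil m s : ℕ) (hn : 1 ≤ ntil) (hm : 1 ≤ m)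
    (N : ℕ) (hN : N = ntil + m)
    (ℱ : Filtration ℕ m0)
    (Chat : ℕ → Ω → ℝ)
    (hmeas : ∀ k, 1 ≤ k → k ≤ N → StronglyMeasurable[ℱ k] (Chat k))
    (hbdd : ∀ k, 1 ≤ k → k ≤ N → ∀ᵐ ω ∂μ, |Chat k ω| ≤ 1)
    (C : ℕ → Ω → ℝ) (hC : ∀ k, 1 ≤ k → k ≤ N → C k = μ[Chat k | ℱ (k - 1)])
    (T P : Finset ℕ)
    (hTP : T ∪ P = Finset.Icc 1 N) (hdisj : Disjoint T P)
    (hTcard : T.card = ntil) (hPcard : P.card = m)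
    (G : Fin s → Finset ℕ)
    (hGdisj : ∀ j k : Fin s, j ≠ k → Disjoint (G j) (G k))
    (hGunion : Finset.univ.biUnion G = T)
    (hGne : ∀ j : Fin s, (G j).Nonempty)
    (μG : Fin s → ℝ) (hμG : ∀ j : Fin s, |μG j| ≤ 1)
    (μi : ℕ → ℝ) (hμi : ∀ j : Fin s, ∀ i ∈ G j, μi i = μG j)
    (hμiP : ∀ i ∈ P, |μi i| ≤ 1)
    (μtil : ℝ) (hμtil : μtil = (1 / N : ℝ) * ∑ i ∈ Finset.Icc 1 N, μi i)
    (ε : ℝ) (hε : 0 < ε) :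
    μ {ω | (∀ j : Fin s,
            |(1 / (G j).card : ℝ) * ∑ i ∈ G j, Chat i ω - μG j| ≤ ε) ∧
          (2 * ntil * ε + m * (2 + ε)) / (ntil + m) <
            |(1 / N : ℝ) * ∑ i ∈ Finset.Icc 1 N, C i ω - μtil|}
      ≤ ENNReal.ofReal (2 * Real.exp (-((ntil + m : ℝ) * ε ^ 2) / 8)) :=
  correlation_estimation_general ntil m s N hN ℱ Chat hmeas hbdd C hC T P hTP hdisj hTcard hPcard G
    hGdisj hGunion μG μi hμi hμiP μtil hμtil ε hε
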